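/- arXiv:2111.10323 — 3 statements merged into one kernel-verified Lean document; each statement's English description precedes it below -/
import Mathlib

section
/- Let $k_0(n) = \lfloor n\,(\ln 5 - \ln 3)/(\ln 5 - \ln 2)\rfloor$ and, for a stake $a > 0$, define the expected net profit after $n$ rounds of Elsberg's game by $G(a,n) = a\,\bigl[-1 + \sum_{k=0}^{k_0(n)} \binom{n}{k} (3/4)^k (3/10)^{n-k} + (1/2)^{n-1} \sum_{k=k_0(n)+1}^{n} \binom{n}{k}\bigr]$. Then for every $a > 0$, $G(a,n) \to -a$ as $n \to \infty$. -/
/-!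
With `K` the number of heads, the two sums in `G` are `E[1.5^K 0.6^(n-K); K ≤ k0 n]` and
`2 P(K > k0 n)`, and both are exponentially small by exponential tilting (Chernoff). With
`c = breakEvenFraction`, losing outcomes have `K ≤ c n`, so inserting `2^(c n - K) ≥ 1` bounds
the first sum by `(2^c · 27/40)^n`; winning outcomes have `K > c n`, so inserting
`(3/2)^(K - c n) ≥ 1` bounds the second by `2 (5/4 · (3/2)^(-c))^n`. The two ratios are about
`0.9934` and `0.9971`, so showing that they are below `1` needs `log₂ 3` and `log₂ 5` to about
four digits.
-/

open Filter

/-- Threshold separating losing from winning numbers of heads in Elsberg's game. -/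
noncomputable def k0 (n : ℕ) : ℕ :=
  ⌊(n : ℝ) * (Real.log 5 - Real.log 3) / (Real.log 5 - Real.log 2)⌋₊

/-- Expected net profit after `n` rounds of Elsberg's game with stake `a`. -/
noncomputable def G (a : ℝ) (n : ℕ) : ℝ :=
  a * (-1 + ∑ k ∈ Finset.range (k0 n + 1), (n.choose k : ℝ) * (3/4)^k * (3/10)^(n-k)
    + (1/2 : ℝ)^(n-1) * ∑ k ∈ Finset.Icc (k0 n + 1) n, (n.choose k : ℝ))

open Finset Real

section BinomialTails

variable {x y r : ℝ} (m n : ℕ)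

lemma sum_range_choose_mul_pow_le_add_pow (hx : 0 ≤ x) (hy : 0 ≤ y) :
    ∑ k ∈ range (m + 1), (n.choose k : ℝ) * x ^ k * y ^ (n - k) ≤ (x + y) ^ n := by
  have hfull : (x + y) ^ n = ∑ k ∈ range (n + 1), (n.choose k : ℝ) * x ^ k * y ^ (n - k) := by
    rw [add_pow]
    exact sum_congr rfl fun k _ => by ring
  rw [hfull]
  rcases le_total m n with hmn | hnm
  · exact sum_le_sum_of_subset_of_nonneg (range_subset_range.mpr (by omega))
      fun k _ _ => by positivity
  · refine (sum_subset (range_subset_range.mpr (by omega)) fun k _ hk => ?_).ge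
    rw [Nat.choose_eq_zero_of_lt (by simpa using hk), Nat.cast_zero, zero_mul, zero_mul]

lemma sum_range_choose_mul_pow_le (hx : 0 ≤ x) (hy : 0 ≤ y) (hr : 1 ≤ r) :
    ∑ k ∈ range (m + 1), (n.choose k : ℝ) * x ^ k * y ^ (n - k) ≤ r ^ m * (x / r + y) ^ n := by
  have hr₀ : 0 < r := one_pos.trans_le hr
  calc ∑ k ∈ range (m + 1), (n.choose k : ℝ) * x ^ k * y ^ (n - k)
      ≤ ∑ k ∈ range (m + 1), r ^ m * ((n.choose k : ℝ) * (x / r) ^ k * y ^ (n - k)) := by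
        refine sum_le_sum fun k hk => ?_
        have hrk : r ^ k ≤ r ^ m := pow_le_pow_right₀ hr (Nat.lt_succ_iff.mp (mem_range.mp hk))
        calc (n.choose k : ℝ) * x ^ k * y ^ (n - k)
            = r ^ k * ((n.choose k : ℝ) * (x / r) ^ k * y ^ (n - k)) := by
              rw [div_pow]; field_simp
          _ ≤ r ^ m * ((n.choose k : ℝ) * (x / r) ^ k * y ^ (n - k)) := by gcongr
    _ = r ^ m * ∑ k ∈ range (m + 1), (n.choose k : ℝ) * (x / r) ^ k * y ^ (n - k) :=
        (mul_sum ..).symm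
    _ ≤ r ^ m * (x / r + y) ^ n := by
        gcongr
        exact sum_range_choose_mul_pow_le_add_pow m n (by positivity) hy

lemma pow_mul_sum_Icc_choose_le (hr : 1 ≤ r) :
    r ^ (m + 1) * ∑ k ∈ Icc (m + 1) n, (n.choose k : ℝ) ≤ (r + 1) ^ n := by
  calc r ^ (m + 1) * ∑ k ∈ Icc (m + 1) n, (n.choose k : ℝ)
      ≤ ∑ k ∈ Icc (m + 1) n, r ^ k * (n.choose k : ℝ) := by
        rw [mul_sum]
        exact sum_le_sum fun k hk => by gcongr; exact (mem_Icc.mp hk).1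
    _ ≤ ∑ k ∈ range (n + 1), r ^ k * (n.choose k : ℝ) :=
        sum_le_sum_of_subset_of_nonneg (fun k hk => by simp at hk ⊢; omega)
          fun k _ _ => by positivity
    _ = (r + 1) ^ n := by simp [add_pow]

end BinomialTails

lemma pow_le_rpow_pow {r c : ℝ} (hr : 1 ≤ r) {m n : ℕ} (h : (m : ℝ) ≤ c * n) :
    r ^ m ≤ (r ^ c) ^ n := by
  rw [← rpow_mul_natCast (by positivity), ← rpow_natCast]
  exact rpow_le_rpow_of_exponent_le hr h

lemma rpow_pow_le_pow {r c : ℝ} (hr : 1 ≤ r) {m n : ℕ} (h : c * n ≤ m) :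
    (r ^ c) ^ n ≤ r ^ m := by
  rw [← rpow_mul_natCast (by positivity), ← rpow_natCast]
  exact rpow_le_rpow_of_exponent_le hr h

/-- The fraction of heads at which the payoff factor breaks even: `1.5 ^ c * 0.6 ^ (1 - c) = 1`. -/
noncomputable def breakEvenFraction : ℝ := (log 5 - log 3) / (log 5 - log 2)

lemma breakEvenFraction_nonneg : 0 ≤ breakEvenFraction :=
  div_nonneg (by linarith [log_le_log (by norm_num) (by norm_num : (3 : ℝ) ≤ 5)])
    (by linarith [log_le_log (by norm_num) (by norm_num : (2 : ℝ) ≤ 5)])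

lemma k0_eq_floor (n : ℕ) : k0 n = ⌊breakEvenFraction * n⌋₊ := by
  rw [k0, breakEvenFraction]
  congr 1
  ring

lemma k0_le (n : ℕ) : (k0 n : ℝ) ≤ breakEvenFraction * n := by
  rw [k0_eq_floor]
  exact Nat.floor_le (by have := breakEvenFraction_nonneg; positivity)

lemma lt_k0_add_one (n : ℕ) : breakEvenFraction * n < k0 n + 1 := by
  rw [k0_eq_floor]
  exact Nat.lt_floor_add_one _

lemma mul_log_lt_mul_log_of_pow_lt {a b : ℝ} (ha : 0 < a) {m n : ℕ} (h : a ^ m < b ^ n) :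
    m * log a < n * log b := by
  rw [← log_pow, ← log_pow]
  exact log_lt_log (by positivity) h

/-- Brackets of width below `10⁻³` for `log₂ 3 ≈ 1.58496` and `log₂ 5 ≈ 2.32193`. -/
lemma log_three_five_bounds :
    84 * log 2 < 53 * log 3 ∧ 41 * log 3 < 65 * log 2 ∧
      65 * log 2 < 28 * log 5 ∧ 59 * log 5 < 137 * log 2 := by
  refine ⟨?_, ?_, ?_, ?_⟩ <;>
  exact_mod_cast mul_log_lt_mul_log_of_pow_lt (by norm_num) (by norm_num)

lemma log_five_sub_log_two_pos : 0 < log 5 - log 2 :=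
  sub_pos.mpr (log_lt_log (by norm_num) (by norm_num))

lemma two_rpow_breakEvenFraction_lt : (2 : ℝ) ^ breakEvenFraction < 40 / 27 := by
  have hlog : log (40 / 27) = 3 * log 2 + log 5 - 3 * log 3 := by
    rw [show (40 / 27 : ℝ) = 2 ^ 3 * 5 / 3 ^ 3 by norm_num, log_div (by norm_num) (by norm_num),
      log_mul (by norm_num) (by norm_num), log_pow, log_pow]
    push_cast; ring
  rw [rpow_lt_iff_lt_log (by norm_num) (by norm_num), hlog, breakEvenFraction, div_mul_eq_mul_div,
    div_lt_iff₀ log_five_sub_log_two_pos]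
  obtain ⟨h₁, h₂, h₃, h₄⟩ := log_three_five_bounds
  nlinarith [log_pos (by norm_num : (1 : ℝ) < 2)]

lemma five_fourths_lt_rpow_breakEvenFraction : (5 / 4 : ℝ) < (3 / 2) ^ breakEvenFraction := by
  have hlog : log (5 / 4) = log 5 - 2 * log 2 := by
    rw [show (5 / 4 : ℝ) = 5 / 2 ^ 2 by norm_num, log_div (by norm_num) (by norm_num), log_pow]
    push_cast; ring
  rw [lt_rpow_iff_log_lt (by norm_num) (by norm_num), hlog, log_div (by norm_num) (by norm_num),
    breakEvenFraction, div_mul_eq_mul_div, lt_div_iff₀ log_five_sub_log_two_pos]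
  obtain ⟨h₁, h₂, h₃, h₄⟩ := log_three_five_bounds
  nlinarith [log_pos (by norm_num : (1 : ℝ) < 2)]

lemma losing_sum_le (n : ℕ) :
    ∑ k ∈ range (k0 n + 1), (n.choose k : ℝ) * (3 / 4) ^ k * (3 / 10) ^ (n - k)
      ≤ ((2 : ℝ) ^ breakEvenFraction * (27 / 40)) ^ n := by
  calc ∑ k ∈ range (k0 n + 1), (n.choose k : ℝ) * (3 / 4) ^ k * (3 / 10) ^ (n - k)
      ≤ 2 ^ k0 n * (3 / 4 / 2 + 3 / 10) ^ n :=
        sum_range_choose_mul_pow_le _ _ (by norm_num) (by norm_num) one_le_two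
    _ ≤ ((2 : ℝ) ^ breakEvenFraction) ^ n * (27 / 40) ^ n := by
        norm_num only
        gcongr
        exact pow_le_rpow_pow one_le_two (k0_le n)
    _ = _ := (mul_pow ..).symm

lemma winning_sum_le (n : ℕ) :
    (1 / 2 : ℝ) ^ (n - 1) * ∑ k ∈ Icc (k0 n + 1) n, (n.choose k : ℝ)
      ≤ 2 * (5 / 4 / (3 / 2 : ℝ) ^ breakEvenFraction) ^ n := by
  set P := (3 / 2 : ℝ) ^ breakEvenFraction
  set S := ∑ k ∈ Icc (k0 n + 1) n, (n.choose k : ℝ)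
  have hP : 0 < P := by positivity
  have hS : 0 ≤ S := sum_nonneg fun k _ => by positivity
  have hPS : P ^ n * S ≤ (5 / 2) ^ n := by
    calc P ^ n * S ≤ (3 / 2) ^ (k0 n + 1) * S := by
          gcongr
          exact rpow_pow_le_pow (by norm_num) (by push_cast; exact (lt_k0_add_one n).le)
      _ ≤ (3 / 2 + 1) ^ n := pow_mul_sum_Icc_choose_le _ _ (by norm_num)
      _ = (5 / 2) ^ n := by norm_num
  have hhalf : (1 / 2 : ℝ) ^ (n - 1) ≤ 2 * (1 / 2) ^ n := by
    rcases n with _ | n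
    · norm_num
    · rw [Nat.add_sub_cancel, pow_succ]; linarith [pow_nonneg (by norm_num : (0 : ℝ) ≤ 1 / 2) n]
  calc (1 / 2 : ℝ) ^ (n - 1) * S ≤ 2 * (1 / 2) ^ n * S := by gcongr
    _ = 2 * (5 / 4 / P) ^ n * (P ^ n * S / (5 / 2) ^ n) := by
        rw [show (1 / 2 : ℝ) ^ n = (5 / 4) ^ n / (5 / 2) ^ n by rw [← div_pow]; norm_num,
          div_pow _ P]
        field_simp
    _ ≤ 2 * (5 / 4 / P) ^ n * 1 := by gcongr; exact div_le_one_of_le₀ hPS (by positivity)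
    _ = _ := mul_one _

lemma tendsto_losing_sum :
    Tendsto
      (fun n : ℕ => ∑ k ∈ range (k0 n + 1), (n.choose k : ℝ) * (3 / 4) ^ k * (3 / 10) ^ (n - k))
      atTop (nhds 0) :=
  squeeze_zero (fun n => sum_nonneg fun k _ => by positivity) losing_sum_le
    (tendsto_pow_atTop_nhds_zero_of_lt_one (by positivity)
      (by linarith [two_rpow_breakEvenFraction_lt]))

lemma tendsto_winning_sum :
    Tendsto (fun n : ℕ => (1 / 2 : ℝ) ^ (n - 1) * ∑ k ∈ Icc (k0 n + 1) n, (n.choose k : ℝ))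
      atTop (nhds 0) := by
  refine squeeze_zero (fun n => by positivity) winning_sum_le ?_
  simpa using (tendsto_pow_atTop_nhds_zero_of_lt_one (by positivity)
    ((div_lt_one (by positivity)).mpr five_fourths_lt_rpow_breakEvenFraction)).const_mul 2

theorem expected_net_profit_tendsto_neg_stake_general (a : ℝ) :
    Tendsto (fun n : ℕ => G a n) atTop (nhds (-a)) := by
  have h := ((tendsto_const_nhds (x := (-1 : ℝ))).add tendsto_losing_sum).add
    tendsto_winning_sum |>.const_mul a
  simpa [G] using h

theorem expected_net_profit_tendsto_neg_stake (a : ℝ) (ha : 0 < a) :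
    Tendsto (fun n : ℕ => G a n) atTop (nhds (-a)) :=
  expected_net_profit_tendsto_neg_stake_general a
end

section
/- If $d \in (0,1]$ and $x \in [0,d]$, then $(1-x)^{1-x} (d-x)^x \ge 1 - x/d$. Moreover, the inequality is strict when $d \in (0,1)$ and $x \in (0,d)$. -/
/-! The weighted harmonic mean of the points `1 - x` and `d - x` with weights `1 - x` and `x`
is exactly `1 - x / d`, so the inequality is weighted HM–GM, strict when `d - x ≠ 1 - x`. -/

open Real

lemma inv_rpow_mul_inv_rpow {p₁ p₂ : ℝ} (hp₁ : 0 ≤ p₁) (hp₂ : 0 ≤ p₂) (w₁ w₂ : ℝ) :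
    p₁⁻¹ ^ w₁ * p₂⁻¹ ^ w₂ = (p₁ ^ w₁ * p₂ ^ w₂)⁻¹ := by
  rw [inv_rpow hp₁, inv_rpow hp₂, mul_inv]

theorem harm_mean_le_geom_mean2_weighted {w₁ w₂ p₁ p₂ : ℝ} (hw₁ : 0 ≤ w₁) (hw₂ : 0 ≤ w₂)
    (hp₁ : 0 < p₁) (hp₂ : 0 < p₂) (hw : w₁ + w₂ = 1) :
    (w₁ / p₁ + w₂ / p₂)⁻¹ ≤ p₁ ^ w₁ * p₂ ^ w₂ := by
  have amgm := geom_mean_le_arith_mean2_weighted hw₁ hw₂ (inv_nonneg.2 hp₁.le)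
    (inv_nonneg.2 hp₂.le) hw
  rw [inv_rpow_mul_inv_rpow hp₁.le hp₂.le] at amgm
  simpa only [div_eq_mul_inv, inv_inv] using inv_anti₀ (by positivity) amgm

theorem harm_mean_lt_geom_mean2_weighted {w₁ w₂ p₁ p₂ : ℝ} (hw₁ : 0 < w₁) (hw₂ : 0 < w₂)
    (hp₁ : 0 < p₁) (hp₂ : 0 < p₂) (hw : w₁ + w₂ = 1) (hp : p₁ ≠ p₂) :
    (w₁ / p₁ + w₂ / p₂)⁻¹ < p₁ ^ w₁ * p₂ ^ w₂ := by
  have amgm := (geom_mean_lt_arith_mean2_weighted_iff_of_pos hw₁ hw₂ (inv_nonneg.2 hp₁.le)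
    (inv_nonneg.2 hp₂.le) hw).2 (inv_injective.ne hp)
  rw [inv_rpow_mul_inv_rpow hp₁.le hp₂.le] at amgm
  simpa only [div_eq_mul_inv, inv_inv] using inv_strictAnti₀ (by positivity) amgm

theorem analytic_inequality_one (d x : ℝ)
    (hd0 : 0 < d) (hd1 : d ≤ 1) (hx0 : 0 ≤ x) (hxd : x ≤ d) :
    1 - x / d ≤ (1 - x) ^ (1 - x) * (d - x) ^ x ∧
    (d < 1 → 0 < x → x < d → 1 - x / d < (1 - x) ^ (1 - x) * (d - x) ^ x) := by
  have harm_mean_eq (hxd' : x < d) : ((1 - x) / (1 - x) + x / (d - x))⁻¹ = 1 - x / d := by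
    have : 1 - x ≠ 0 := by linarith
    have : d - x ≠ 0 := by linarith
    field_simp [hd0.ne']
    ring
  refine ⟨?_, fun hd1' hx0' hxd' => ?_⟩
  · rcases hxd.eq_or_lt with rfl | hxd'
    · rw [div_self hd0.ne', sub_self]
      positivity
    · rw [← harm_mean_eq hxd']
      exact harm_mean_le_geom_mean2_weighted (by linarith) hx0 (by linarith) (by linarith)
        (by ring)
  · rw [← harm_mean_eq hxd']
    exact harm_mean_lt_geom_mean2_weighted (by linarith) hx0' (by linarith) (by linarith)
      (by ring) (sub_lt_sub_right hd1' x).ne'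
end

section
/- Let $p \in (0,1)$, $0 < d \le 1 \le u$ with $u \ne d$, $\tilde{k}_0(n,u,d) = \lfloor n \ln(1/d)/\ln(u/d) \rfloor$, let $X_n$ be a Binomial$(n,p)$ random variable, and set $C_n = \sum_{k=0}^{\tilde{k}_0(n,u,d)} \mathbf{1}\{X_n = k\}\, u^k d^{n-k}$. Then $\mathbb{V}(C_n) \to 0$ as $n \to \infty$. -/
/-!
The payout `u^k d^(n-k)` is at most `1` at the threshold `k = ktilde n u d` and decays
geometrically, by the factor `d/u`, below it. Hence `𝔼[C_n²]` is at most the largest binomial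
probability times a convergent geometric series. The largest binomial probability tends to `0`:
far from the ends, Stirling's bounds give `P(X_n = k) ≤ √(1/k + 1/(n-k))`, and within bounded
distance of the ends `P(X_n = k)` is at most polynomial in `n` times `(1 - p)^n` or `p^n`.
-/

open Filter MeasureTheory ProbabilityTheory Topology Real

/-- Threshold separating losing from winning numbers of heads. -/
noncomputable def ktilde (n : ℕ) (u d : ℝ) : ℕ :=
  ⌊(n : ℝ) * Real.log (1/d) / Real.log (u/d)⌋₊

noncomputable def binomialProb (p : ℝ) (n k : ℕ) : ℝ :=
  n.choose k * p ^ k * (1 - p) ^ (n - k)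

lemma binomialProb_nonneg {p : ℝ} (hp0 : 0 ≤ p) (hp1 : p ≤ 1) (n k : ℕ) :
    0 ≤ binomialProb p n k := by
  have : 0 ≤ 1 - p := by linarith
  unfold binomialProb; positivity

lemma binomialProb_symm (p : ℝ) {n k : ℕ} (hk : k ≤ n) :
    binomialProb p n k = binomialProb (1 - p) n (n - k) := by
  simp only [binomialProb, Nat.choose_symm hk, Nat.sub_sub_self hk, sub_sub_cancel]
  ring

lemma factorial_le_exp_one_mul_sqrt {n : ℕ} (hn : n ≠ 0) :
    (n.factorial : ℝ) ≤ exp 1 * √n * (n / exp 1) ^ n := by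
  have hseq : Stirling.stirlingSeq n ≤ exp 1 / √2 := by
    obtain ⟨m, rfl⟩ := Nat.exists_eq_succ_of_ne_zero hn
    rw [← Stirling.stirlingSeq_one]
    exact Stirling.stirlingSeq'_antitone (Nat.zero_le m)
  calc (n.factorial : ℝ) = Stirling.stirlingSeq n * (√(2 * n) * (n / exp 1) ^ n) := by
        rw [Stirling.stirlingSeq, div_mul_cancel₀ _ (by positivity)]
    _ ≤ exp 1 / √2 * (√(2 * n) * (n / exp 1) ^ n) := by gcongr
    _ = exp 1 * √n * (n / exp 1) ^ n := by
        rw [Real.sqrt_mul zero_le_two]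
        field_simp

lemma pow_le_exp_mul_sub_one {x : ℝ} (hx : 0 ≤ x) (k : ℕ) : x ^ k ≤ exp (k * (x - 1)) := by
  rw [Real.exp_nat_mul]
  exact pow_le_pow_left₀ hx (by linarith [Real.add_one_le_exp (x - 1)]) k

lemma pow_mul_one_sub_pow_le {p : ℝ} (hp0 : 0 ≤ p) (hp1 : p ≤ 1) {k m : ℕ} (hk : k ≠ 0)
    (hm : m ≠ 0) :
    p ^ k * (1 - p) ^ m ≤ (k / (k + m) : ℝ) ^ k * (m / (k + m) : ℝ) ^ m := by
  have hq : 0 ≤ 1 - p := by linarith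
  have hk' : (0 : ℝ) < k := by positivity
  have hm' : (0 : ℝ) < m := by positivity
  set n : ℝ := k + m
  have hn : 0 < n := by positivity
  have hamgm : (p * n / k) ^ k * ((1 - p) * n / m) ^ m ≤ 1 := calc
    _ ≤ exp (k * (p * n / k - 1)) * exp (m * ((1 - p) * n / m - 1)) := by
      gcongr
      all_goals exact pow_le_exp_mul_sub_one (by positivity) _
    _ = 1 := by
      rw [← Real.exp_add, Real.exp_eq_one_iff]
      field_simp
      ring
  calc p ^ k * (1 - p) ^ m
      = (k / n) ^ k * (m / n) ^ m * ((p * n / k) ^ k * ((1 - p) * n / m) ^ m) := by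
        rw [mul_mul_mul_comm, ← mul_pow, ← mul_pow]
        congr 2 <;> field_simp
    _ ≤ (k / n) ^ k * (m / n) ^ m := mul_le_of_le_one_right (by positivity) hamgm

lemma binomialProb_add_le_sqrt {p : ℝ} (hp0 : 0 ≤ p) (hp1 : p ≤ 1) {k m : ℕ} (hk : k ≠ 0)
    (hm : m ≠ 0) : binomialProb p (k + m) k ≤ √(1 / k + 1 / m) := by
  have hk' : (0 : ℝ) < k := by positivity
  have hm' : (0 : ℝ) < m := by positivity
  set n : ℝ := k + m
  have hn : 0 < n := by positivity
  have hfact : ((k + m).choose k : ℝ) * k.factorial * m.factorial = (k + m).factorial := by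
    have := Nat.choose_mul_factorial_mul_factorial (Nat.le_add_right k m)
    rw [Nat.add_sub_cancel_left] at this
    exact_mod_cast this
  have hchoose : ((k + m).choose k : ℝ) ≤
      exp 1 * √n * (n / exp 1) ^ (k + m) /
        ((√(2 * π * k) * (k / exp 1) ^ k) * (√(2 * π * m) * (m / exp 1) ^ m)) := by
    rw [le_div_iff₀ (by positivity)]
    calc _ ≤ ((k + m).choose k : ℝ) * (k.factorial * m.factorial) := by
          gcongr
          exacts [Stirling.le_factorial_stirling k, Stirling.le_factorial_stirling m]
      _ = (k + m).factorial := by rw [← hfact, mul_assoc]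
      _ ≤ exp 1 * √n * (n / exp 1) ^ (k + m) := by
          have := factorial_le_exp_one_mul_sqrt (n := k + m) (by omega)
          push_cast at this
          exact this
  have hpow : (n / exp 1) ^ (k + m) * ((k / n) ^ k * (m / n) ^ m)
      = (k / exp 1) ^ k * (m / exp 1) ^ m := by
    rw [pow_add, mul_mul_mul_comm, ← mul_pow, ← mul_pow]
    congr 2 <;> field_simp
  have hsqrt : √(1 / k + 1 / m) = √n / (√k * √m) := by
    rw [← Real.sqrt_mul hk'.le, ← Real.sqrt_div hn.le]
    congr 1
    field_simp
    ring
  calc binomialProb p (k + m) k = ((k + m).choose k : ℝ) * (p ^ k * (1 - p) ^ m) := by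
        simp only [binomialProb, Nat.add_sub_cancel_left]; ring
    _ ≤ ((k + m).choose k : ℝ) * ((k / n) ^ k * (m / n) ^ m) := by
        exact mul_le_mul_of_nonneg_left (pow_mul_one_sub_pow_le hp0 hp1 hk hm) (by positivity)
    _ ≤ exp 1 * √n * (n / exp 1) ^ (k + m) /
        ((√(2 * π * k) * (k / exp 1) ^ k) * (√(2 * π * m) * (m / exp 1) ^ m)) *
          ((k / n) ^ k * (m / n) ^ m) := by gcongr
    _ = exp 1 / (2 * π) * √(1 / k + 1 / m) := by
        rw [mul_div_right_comm, mul_assoc, div_mul_eq_mul_div, hpow, hsqrt,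
          Real.sqrt_mul' _ hk'.le, Real.sqrt_mul' _ hm'.le]
        field_simp
        rw [Real.sq_sqrt (by positivity)]
    _ ≤ √(1 / k + 1 / m) := by
        refine mul_le_of_le_one_left (Real.sqrt_nonneg _) ?_
        rw [div_le_one (by positivity)]
        linarith [Real.exp_one_lt_d9, Real.pi_gt_three]

lemma binomialProb_le_of_le {p : ℝ} (hp0 : 0 ≤ p) (hp1 : p < 1) {n k M : ℕ} (hn : n ≠ 0)
    (hkM : k ≤ M) : binomialProb p n k ≤ n ^ M * (1 - p) ^ n / (1 - p) ^ M := by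
  have hq : 0 < 1 - p := by linarith
  rcases lt_or_ge n k with hnk | hkn
  · simp only [binomialProb, Nat.choose_eq_zero_of_lt hnk, Nat.cast_zero, zero_mul]
    positivity
  have hchoose : (n.choose k : ℝ) ≤ (n : ℝ) ^ M := by
    calc (n.choose k : ℝ) ≤ (n : ℝ) ^ k := by exact_mod_cast Nat.choose_le_pow n k
      _ ≤ (n : ℝ) ^ M :=
        pow_le_pow_right₀ (by exact_mod_cast Nat.one_le_iff_ne_zero.mpr hn) hkM
  calc binomialProb p n k ≤ (n : ℝ) ^ M * 1 * ((1 - p) ^ n / (1 - p) ^ M) := by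
        have hpk : p ^ k ≤ 1 := pow_le_one₀ hp0 hp1.le
        have hqM : (1 - p) ^ M ≤ (1 - p) ^ k := pow_le_pow_of_le_one hq.le (by linarith) hkM
        rw [binomialProb, pow_sub₀ _ hq.ne' hkn, ← div_eq_mul_inv]
        gcongr
    _ = n ^ M * (1 - p) ^ n / (1 - p) ^ M := by ring

lemma tendsto_pow_mul_pow_div_pow {q : ℝ} (hq0 : 0 ≤ q) (hq1 : q < 1) (M : ℕ) :
    Tendsto (fun n : ℕ => (n : ℝ) ^ M * q ^ n / q ^ M) atTop (𝓝 0) := by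
  simpa using (tendsto_pow_const_mul_const_pow_of_lt_one M hq0 hq1).div_const (q ^ M)

theorem tendstoUniformly_binomialProb {p : ℝ} (hp0 : 0 < p) (hp1 : p < 1) :
    TendstoUniformly (fun n k => binomialProb p n k) 0 atTop := by
  rw [Metric.tendstoUniformly_iff]
  intro ε hε
  obtain ⟨M, hM⟩ := exists_nat_gt (2 / ε ^ 2)
  have hM0 : (0 : ℝ) < M := lt_trans (by positivity) hM
  have hsmall := (tendsto_pow_mul_pow_div_pow (q := 1 - p) (by linarith) (by linarith) M)
  have hlarge := tendsto_pow_mul_pow_div_pow hp0.le hp1 M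
  filter_upwards [hsmall.eventually_lt_const hε, hlarge.eventually_lt_const hε,
    eventually_ne_atTop 0] with n hsmall hlarge hn k
  rw [Pi.zero_apply, dist_zero_left, Real.norm_of_nonneg (binomialProb_nonneg hp0.le hp1.le n k)]
  rcases le_or_gt k M with hkM | hMk
  · exact (binomialProb_le_of_le hp0.le hp1 hn hkM).trans_lt hsmall
  rcases lt_or_ge n k with hnk | hkn
  · simpa [binomialProb, Nat.choose_eq_zero_of_lt hnk] using hε
  rcases le_or_gt (n - k) M with hnkM | hMnk
  · rw [binomialProb_symm p hkn]
    refine (binomialProb_le_of_le (by linarith) (by linarith) hn hnkM).trans_lt ?_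
    simpa using hlarge
  obtain ⟨m, rfl⟩ := Nat.exists_eq_add_of_le hkn
  rw [Nat.add_sub_cancel_left] at hMnk
  have hk : (M : ℝ) < k := by exact_mod_cast hMk
  have hm : (M : ℝ) < m := by exact_mod_cast hMnk
  calc binomialProb p (k + m) k ≤ √(1 / k + 1 / m) :=
        binomialProb_add_le_sqrt hp0.le hp1.le (by omega) (by omega)
    _ < √(ε ^ 2) := by
        gcongr
        calc 1 / (k : ℝ) + 1 / m ≤ 1 / M + 1 / M := by gcongr
          _ = 2 / M := by ring
          _ < ε ^ 2 := by rwa [div_lt_iff₀ hM0, ← div_lt_iff₀' (by positivity)]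
    _ = ε := Real.sqrt_sq hε.le

lemma tendsto_sum_mul_pow_sub_of_tendstoUniformly {f : ℕ → ℕ → ℝ}
    (hf : TendstoUniformly f 0 atTop) {r : ℝ} (hr0 : 0 ≤ r) (hr1 : r < 1) (K : ℕ → ℕ) :
    Tendsto (fun n => ∑ k ∈ Finset.range (K n + 1), f n k * r ^ (K n - k)) atTop (𝓝 0) := by
  rw [Metric.tendstoUniformly_iff] at hf
  rw [Metric.tendsto_nhds]
  intro ε hε
  have hr : 0 < 1 - r := by linarith
  filter_upwards [hf (ε * (1 - r) / 2) (by positivity)] with n hn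
  have hgeom : ∑ k ∈ Finset.range (K n + 1), r ^ (K n - k) ≤ 1 / (1 - r) := by
    have hreflect := Finset.sum_range_reflect (fun j => r ^ j) (K n + 1)
    rw [Nat.add_sub_cancel] at hreflect
    rw [hreflect, Finset.range_eq_Ico]
    simpa using geom_sum_Ico_le_of_lt_one (m := 0) (n := K n + 1) hr0 hr1
  rw [Real.dist_0_eq_abs]
  calc |∑ k ∈ Finset.range (K n + 1), f n k * r ^ (K n - k)|
      ≤ ∑ k ∈ Finset.range (K n + 1), |f n k| * r ^ (K n - k) := by
        refine (Finset.abs_sum_le_sum_abs _ _).trans_eq ?_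
        simp only [abs_mul, abs_pow, abs_of_nonneg hr0]
    _ ≤ ∑ k ∈ Finset.range (K n + 1), ε * (1 - r) / 2 * r ^ (K n - k) := by
        gcongr with k
        simpa using (hn k).le
    _ ≤ ε * (1 - r) / 2 * (1 / (1 - r)) := by
        rw [← Finset.mul_sum]
        gcongr
    _ < ε := by
        field_simp
        linarith

section Threshold

variable {u d : ℝ}

lemma ktilde_le (hd0 : 0 < d) (hu : 1 ≤ u) (hdu : d < u) (n : ℕ) : ktilde n u d ≤ n := by
  have hlog : 0 < Real.log (u / d) := Real.log_pos ((one_lt_div hd0).mpr hdu)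
  refine Nat.floor_le_of_le ?_
  rw [div_le_iff₀ hlog]
  gcongr

lemma pow_ktilde_mul_pow_le_one (hd0 : 0 < d) (hd1 : d ≤ 1) (hu : 1 ≤ u) (hdu : d < u)
    (n : ℕ) : u ^ ktilde n u d * d ^ (n - ktilde n u d) ≤ 1 := by
  set K := ktilde n u d
  have hKn : K ≤ n := ktilde_le hd0 hu hdu n
  have hlog : 0 < Real.log (u / d) := Real.log_pos ((one_lt_div hd0).mpr hdu)
  have hK : (K : ℝ) * Real.log (u / d) ≤ n * Real.log (1 / d) := by
    rw [← le_div_iff₀ hlog]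
    have hlog1 : 0 ≤ Real.log (1 / d) := Real.log_nonneg (one_le_one_div hd0 hd1)
    exact Nat.floor_le (by positivity)
  have hpow : (u / d) ^ K ≤ (1 / d) ^ n := by
    rwa [← Real.log_le_log_iff (by positivity) (by positivity), Real.log_pow, Real.log_pow]
  calc u ^ K * d ^ (n - K) = (u / d) ^ K * d ^ n := by
        rw [div_pow, ← Nat.sub_add_cancel hKn, pow_add, Nat.add_sub_cancel]
        field_simp
    _ ≤ (1 / d) ^ n * d ^ n := by gcongr
    _ = 1 := by rw [← mul_pow, one_div_mul_cancel hd0.ne', one_pow]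

lemma sq_pow_mul_pow_le_of_le_ktilde (hd0 : 0 < d) (hd1 : d ≤ 1) (hu : 1 ≤ u) (hdu : d < u)
    {n k : ℕ} (hk : k ≤ ktilde n u d) :
    (u ^ k * d ^ (n - k)) ^ 2 ≤ ((d / u) ^ 2) ^ (ktilde n u d - k) := by
  set K := ktilde n u d
  have hKn : K ≤ n := ktilde_le hd0 hu hdu n
  have hu0 : 0 < u := hd0.trans hdu
  have hsplit : u ^ k * d ^ (n - k) = u ^ K * d ^ (n - K) * (d / u) ^ (K - k) := by
    have hdpow : d ^ (n - k) = d ^ (n - K) * d ^ (K - k) := by rw [← pow_add]; congr 1; omega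
    rw [hdpow, div_pow, ← Nat.sub_add_cancel hk, pow_add, Nat.add_sub_cancel]
    field_simp
  rw [← pow_mul, mul_comm 2, pow_mul]
  gcongr
  rw [hsplit]
  exact mul_le_of_le_one_left (by positivity) (pow_ktilde_mul_pow_le_one hd0 hd1 hu hdu n)

end Threshold

lemma sq_sum_ite_eq (s : Finset ℕ) (w : ℕ → ℝ) (x : ℕ) :
    (∑ k ∈ s, if x = k then w k else 0) ^ 2 = ∑ k ∈ s, if x = k then w k ^ 2 else 0 := by
  rw [Finset.sum_ite_eq, Finset.sum_ite_eq]
  split_ifs <;> simp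

section IndicatorSum

variable {Ω : Type*} [MeasurableSpace Ω] {μ : Measure Ω} {X : Ω → ℕ}

lemma integral_sum_ite_eq [IsFiniteMeasure μ] (hX : Measurable X) (s : Finset ℕ) (w : ℕ → ℝ) :
    ∫ ω, (∑ k ∈ s, if X ω = k then w k else 0) ∂μ =
      ∑ k ∈ s, μ.real {ω | X ω = k} * w k := by
  have hind : ∀ k,
      (fun ω => if X ω = k then w k else 0) = {ω | X ω = k}.indicator (fun _ => w k) :=
    fun k => funext fun ω => by simp [Set.indicator_apply]
  have hmeas : ∀ k, MeasurableSet {ω | X ω = k} := fun k => hX (measurableSet_singleton k)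
  rw [integral_finsetSum]
  · refine Finset.sum_congr rfl fun k _ => ?_
    rw [hind, integral_indicator_const _ (hmeas k), smul_eq_mul]
  · exact fun k _ => hind k ▸ (integrable_const (w k)).indicator (hmeas k)

lemma variance_sum_ite_le [IsProbabilityMeasure μ] (hX : Measurable X) (s : Finset ℕ)
    (w : ℕ → ℝ) :
    variance (fun ω => ∑ k ∈ s, if X ω = k then w k else 0) μ
      ≤ ∑ k ∈ s, μ.real {ω | X ω = k} * w k ^ 2 := by
  refine (variance_le_expectation_sq ?_).trans_eq ?_
  · refine (Finset.measurable_sum s fun k _ => ?_).aestronglyMeasurable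
    exact Measurable.ite (hX (measurableSet_singleton k)) measurable_const measurable_const
  · simp only [Pi.pow_apply, sq_sum_ite_eq]
    exact integral_sum_ite_eq hX s (fun k => w k ^ 2)

end IndicatorSum

theorem variance_of_losing_payout_tendsto_zero
    {Ω : Type*} [MeasurableSpace Ω] (μ : Measure Ω) [IsProbabilityMeasure μ]
    (p u d : ℝ) (hp0 : 0 < p) (hp1 : p < 1)
    (hd0 : 0 < d) (hd1 : d ≤ 1) (hu : 1 ≤ u) (hne : u ≠ d)
    (X : ℕ → Ω → ℕ) (hXmeas : ∀ n, Measurable (X n))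
    (hXbin : ∀ n k : ℕ,
      μ {ω | X n ω = k} = ENNReal.ofReal ((n.choose k : ℝ) * p^k * (1 - p)^(n-k)))
    (C : ℕ → Ω → ℝ)
    (hC : ∀ n ω, C n ω =
      ∑ k ∈ Finset.range (ktilde n u d + 1),
        if X n ω = k then u^k * d^(n-k) else 0) :
    Tendsto (fun n : ℕ => ProbabilityTheory.variance (C n) μ) atTop (nhds 0) := by
  have hdu : d < u := lt_of_le_of_ne (hd1.trans hu) hne.symm
  have hρ1 : (d / u) ^ 2 < 1 :=
    pow_lt_one₀ (by positivity) ((div_lt_one (hd0.trans hdu)).mpr hdu) two_ne_zero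
  have hprob : ∀ n k, μ.real {ω | X n ω = k} = binomialProb p n k := fun n k => by
    rw [measureReal_def, hXbin, ← binomialProb,
      ENNReal.toReal_ofReal (binomialProb_nonneg hp0.le hp1.le n k)]
  have hbound : ∀ n, variance (C n) μ ≤ ∑ k ∈ Finset.range (ktilde n u d + 1),
      binomialProb p n k * ((d / u) ^ 2) ^ (ktilde n u d - k) := by
    intro n
    rw [show C n = _ from funext (hC n)]
    refine (variance_sum_ite_le (hXmeas n) _ _).trans (Finset.sum_le_sum fun k hk => ?_)
    rw [hprob]
    gcongr
    · exact binomialProb_nonneg hp0.le hp1.le n k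
    · exact sq_pow_mul_pow_le_of_le_ktilde hd0 hd1 hu hdu (Finset.mem_range_succ_iff.mp hk)
  exact squeeze_zero (fun n => variance_nonneg _ _) hbound
    (tendsto_sum_mul_pow_sub_of_tendstoUniformly (tendstoUniformly_binomialProb hp0 hp1)
      (by positivity) hρ1 _)
end
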